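/- If the 4×4 matrix A (as defined) is positive semidefinite and all four quantities y₁ := 2Re(x·ȳ·t), y₂ := 2Re(x·u·z̄), y₃ := 2Re(y·w·z̄), y₄ := 2Re(t·w·ū) are nonnegative, then [per(A)]² ≥ 1 + ½·[s₁² + s₂² + s₃² + s₄²] + (|xw|² + |yu|² + |zt|²)², where s₁ := |x|²+|y|²+|t|², s₂ := |x|²+|z|²+|u|², s₃ := |y|²+|z|²+|w|², s₄ := |t|²+|u|²+|w|². -/

import Mathlib

open Matrix Complex ComplexOrder ComplexConjugate

/-!
Grouping the 24 permutations by cycle type gives `per A = 1 + S + Q + Y + C`, where `S` is the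
sum of the `|a_ij|²`, `Q` the sum of `|a_ij a_kl|²` over the three perfect matchings,
`Y = y₁ + y₂ + y₃ + y₄` collects the 3-cycles and `C` the three 4-cycles. Each 4-cycle term is
`2 Re (p q̄)` for two matching products `p, q`, so `C ≥ -2Q`. The `3 × 3` principal minors give
`sᵢ ≤ 1 + yᵢ`, hence `Y ≥ max 0 (2S - 4)`, and the `2 × 2` minors give `|a_ij| ≤ 1`, hence
`2Q ≤ S`. So `per A ≥ max (1 + S - Q) (3S - 3 - Q)`, while `½ ∑ sᵢ² ≤ S² - 2Q`; what remains is
an inequality in the two real variables `S` and `Q`.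
-/

namespace Matrix.PosSemidef

variable {n : Type*} {A : Matrix n n ℂ}

theorem norm_apply_le_one (hA : A.PosSemidef) {i j : n} (hi : A i i = 1) (hj : A j j = 1) :
    ‖A i j‖ ≤ 1 := by
  have hdet := (hA.submatrix ![i, j]).det_nonneg
  have hji : A j i = conj (A i j) := (hA.isHermitian.apply j i).symm
  simp only [det_fin_two, submatrix_apply, cons_val_zero, cons_val_one, hi, hj, hji,
    mul_conj, one_mul] at hdet
  rw [← ofReal_one, ← ofReal_sub, zero_le_real, sub_nonneg, normSq_eq_norm_sq] at hdet
  exact (sq_le_one_iff₀ (norm_nonneg _)).1 hdet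

theorem norm_sq_add_norm_sq_add_norm_sq_le (hA : A.PosSemidef) {i j k : n} (hi : A i i = 1)
    (hj : A j j = 1) (hk : A k k = 1) :
    ‖A i j‖ ^ 2 + ‖A i k‖ ^ 2 + ‖A j k‖ ^ 2 ≤ 1 + 2 * (A i j * A j k * A k i).re := by
  have hdet := (hA.submatrix ![i, j, k]).det_nonneg
  have hji : A j i = conj (A i j) := (hA.isHermitian.apply j i).symm
  have hki : A k i = conj (A i k) := (hA.isHermitian.apply k i).symm
  have hkj : A k j = conj (A j k) := (hA.isHermitian.apply k j).symm
  simp only [det_fin_three, submatrix_apply, cons_val_zero, cons_val_one, cons_val_two,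
    tail_cons, head_cons, hi, hj, hk, hji, hki, hkj] at hdet
  have hre := (le_def.1 hdet).1
  rw [hki]
  simp only [Complex.sq_norm, normSq_apply, mul_re, mul_im, conj_re, conj_im, sub_re, add_re,
    one_re, one_im, zero_re] at hre ⊢
  linarith

end Matrix.PosSemidef

theorem permanent_fin_four {R : Type*} [CommRing R] (M : Matrix (Fin 4) (Fin 4) R) : M.permanent =
    M 0 0 * M 1 1 * M 2 2 * M 3 3 + M 0 0 * M 1 1 * M 3 2 * M 2 3
  + M 0 0 * M 2 1 * M 1 2 * M 3 3 + M 0 0 * M 2 1 * M 3 2 * M 1 3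
  + M 0 0 * M 3 1 * M 2 2 * M 1 3 + M 0 0 * M 3 1 * M 1 2 * M 2 3
  + M 1 0 * M 0 1 * M 2 2 * M 3 3 + M 1 0 * M 0 1 * M 3 2 * M 2 3
  + M 1 0 * M 2 1 * M 0 2 * M 3 3 + M 1 0 * M 2 1 * M 3 2 * M 0 3
  + M 1 0 * M 3 1 * M 2 2 * M 0 3 + M 1 0 * M 3 1 * M 0 2 * M 2 3
  + M 2 0 * M 1 1 * M 0 2 * M 3 3 + M 2 0 * M 1 1 * M 3 2 * M 0 3
  + M 2 0 * M 0 1 * M 1 2 * M 3 3 + M 2 0 * M 0 1 * M 3 2 * M 1 3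
  + M 2 0 * M 3 1 * M 0 2 * M 1 3 + M 2 0 * M 3 1 * M 1 2 * M 0 3
  + M 3 0 * M 1 1 * M 2 2 * M 0 3 + M 3 0 * M 1 1 * M 0 2 * M 2 3
  + M 3 0 * M 2 1 * M 1 2 * M 0 3 + M 3 0 * M 2 1 * M 0 2 * M 1 3
  + M 3 0 * M 0 1 * M 2 2 * M 1 3 + M 3 0 * M 0 1 * M 1 2 * M 2 3 := by
  simp only [permanent, Finset.univ_perm_fin_succ, Finset.sum_map,
    ← Finset.univ_product_univ, Finset.sum_product, Equiv.toEmbedding_apply,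
    Fin.sum_univ_succ, Fin.prod_univ_succ, Equiv.Perm.decomposeFin_symm_apply_zero,
    Equiv.Perm.decomposeFin_symm_apply_succ, Finset.univ_unique, Finset.sum_singleton,
    Finset.prod_singleton]
  norm_num [Equiv.swap_apply_def, Fin.ext_iff]
  simp only [show (Fin.succ 2 : Fin 4) = 3 from rfl]
  ring

theorem permanent_correlation_four (x y z t u w : ℂ) :
    !![1, x, y, z; conj x, 1, t, u; conj y, conj t, 1, w; conj z, conj u, conj w, 1].permanent =
      ((1 + (‖x‖ ^ 2 + ‖y‖ ^ 2 + ‖z‖ ^ 2 + ‖t‖ ^ 2 + ‖u‖ ^ 2 + ‖w‖ ^ 2)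
        + (‖x * w‖ ^ 2 + ‖y * u‖ ^ 2 + ‖z * t‖ ^ 2)
        + (2 * (x * conj y * t).re + 2 * (x * u * conj z).re + 2 * (y * w * conj z).re
          + 2 * (t * w * conj u).re)
        + (2 * (x * w * conj (z * conj t)).re + 2 * (x * conj w * conj (y * conj u)).re
          + 2 * (z * t * conj (y * u)).re) : ℝ) : ℂ) := by
  rw [permanent_fin_four]
  apply Complex.ext <;>
    simp [mul_pow, Complex.sq_norm, normSq_apply] <;> ring

theorem neg_le_two_mul_re_mul_conj (a b : ℂ) : -(‖a‖ ^ 2 + ‖b‖ ^ 2) ≤ 2 * (a * conj b).re := by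
  have h := normSq_nonneg (a + b)
  rw [normSq_add, normSq_eq_norm_sq, normSq_eq_norm_sq] at h
  linarith

theorem two_mul_sq_mul_sq_le {a b : ℝ} (ha₀ : 0 ≤ a) (ha₁ : a ≤ 1) (hb₀ : 0 ≤ b) (hb₁ : b ≤ 1) :
    2 * (a ^ 2 * b ^ 2) ≤ a ^ 2 + b ^ 2 := by
  have ha : a ^ 2 ≤ 1 := pow_le_one₀ ha₀ ha₁
  have hb : b ^ 2 ≤ 1 := pow_le_one₀ hb₀ hb₁
  nlinarith [mul_le_of_le_one_right (sq_nonneg a) hb, mul_le_of_le_one_left (sq_nonneg b) ha]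

-- Every pair of entries other than the three opposite pairs shares exactly one row.
theorem half_sum_sq_row_sums_le {x y z t u w : ℝ} (hx : 0 ≤ x) (hy : 0 ≤ y) (hz : 0 ≤ z)
    (ht : 0 ≤ t) (hu : 0 ≤ u) (hw : 0 ≤ w) :
    1 / 2 * ((x + y + t) ^ 2 + (x + z + u) ^ 2 + (y + z + w) ^ 2 + (t + u + w) ^ 2)
      ≤ (x + y + z + t + u + w) ^ 2 - 2 * (x * w + y * u + z * t) := by
  have hdiff : (x + y + z + t + u + w) ^ 2 - 2 * (x * w + y * u + z * t)
      - 1 / 2 * ((x + y + t) ^ 2 + (x + z + u) ^ 2 + (y + z + w) ^ 2 + (t + u + w) ^ 2)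
      = x * y + x * t + y * t + x * z + x * u + z * u + y * z + y * w + z * w
        + t * u + t * w + u * w := by ring
  rw [← sub_nonneg, hdiff]
  positivity

theorem one_add_sq_le_sq {S Q P : ℝ} (hS : 0 ≤ S) (hQ : 2 * Q ≤ S) (h₁ : 1 + S - Q ≤ P)
    (h₂ : 3 * S - 3 - Q ≤ P) : 1 + (S ^ 2 - 2 * Q) + Q ^ 2 ≤ P ^ 2 := by
  rcases le_total S 2 with hS2 | hS2
  · have hsq := pow_le_pow_left₀ (by linarith) h₁ 2
    nlinarith [mul_nonneg hS (sub_nonneg.2 hS2), mul_nonneg hS (sub_nonneg.2 hQ)]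
  · have hsq := pow_le_pow_left₀ (by linarith) h₂ 2
    nlinarith [mul_nonneg (sub_nonneg.2 hS2) (by linarith : (0:ℝ) ≤ 5 * S - 4),
      mul_nonneg (by linarith : (0:ℝ) ≤ 3 * S - 4) (sub_nonneg.2 hQ)]

theorem case1_bound (x y z t u w : ℂ)
    (A : Matrix (Fin 4) (Fin 4) ℂ)
    (hAdef : A = !![1, x, y, z;
                    (starRingEnd ℂ) x, 1, t, u;
                    (starRingEnd ℂ) y, (starRingEnd ℂ) t, 1, w;
                    (starRingEnd ℂ) z, (starRingEnd ℂ) u, (starRingEnd ℂ) w, 1])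
    (hA : A.PosSemidef)
    (hy1 : (0:ℝ) ≤ 2 * (x * (starRingEnd ℂ) y * t).re)
    (hy2 : (0:ℝ) ≤ 2 * (x * u * (starRingEnd ℂ) z).re)
    (hy3 : (0:ℝ) ≤ 2 * (y * w * (starRingEnd ℂ) z).re)
    (hy4 : (0:ℝ) ≤ 2 * (t * w * (starRingEnd ℂ) u).re) :
    ((1 + (1/2 : ℝ) *
        ((‖x‖ ^ 2 + ‖y‖ ^ 2 + ‖t‖ ^ 2) ^ 2
          + (‖x‖ ^ 2 + ‖z‖ ^ 2 + ‖u‖ ^ 2) ^ 2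
          + (‖y‖ ^ 2 + ‖z‖ ^ 2 + ‖w‖ ^ 2) ^ 2
          + (‖t‖ ^ 2 + ‖u‖ ^ 2 + ‖w‖ ^ 2) ^ 2)
        + (‖x * w‖ ^ 2 + ‖y * u‖ ^ 2
            + ‖z * t‖ ^ 2) ^ 2 : ℝ) : ℂ) ≤ A.permanent ^ 2 := by
  subst hAdef
  have hx : ‖x‖ ≤ 1 := hA.norm_apply_le_one (i := 0) (j := 1) rfl rfl
  have hy : ‖y‖ ≤ 1 := hA.norm_apply_le_one (i := 0) (j := 2) rfl rfl
  have hz : ‖z‖ ≤ 1 := hA.norm_apply_le_one (i := 0) (j := 3) rfl rfl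
  have ht : ‖t‖ ≤ 1 := hA.norm_apply_le_one (i := 1) (j := 2) rfl rfl
  have hu : ‖u‖ ≤ 1 := hA.norm_apply_le_one (i := 1) (j := 3) rfl rfl
  have hw : ‖w‖ ≤ 1 := hA.norm_apply_le_one (i := 2) (j := 3) rfl rfl
  have h₁ : ‖x‖ ^ 2 + ‖y‖ ^ 2 + ‖t‖ ^ 2 ≤ 1 + 2 * (x * conj y * t).re := by
    simpa [mul_right_comm x t] using
      hA.norm_sq_add_norm_sq_add_norm_sq_le (i := 0) (j := 1) (k := 2) rfl rfl rfl
  have h₂ : ‖x‖ ^ 2 + ‖z‖ ^ 2 + ‖u‖ ^ 2 ≤ 1 + 2 * (x * u * conj z).re :=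
    hA.norm_sq_add_norm_sq_add_norm_sq_le (i := 0) (j := 1) (k := 3) rfl rfl rfl
  have h₃ : ‖y‖ ^ 2 + ‖z‖ ^ 2 + ‖w‖ ^ 2 ≤ 1 + 2 * (y * w * conj z).re :=
    hA.norm_sq_add_norm_sq_add_norm_sq_le (i := 0) (j := 2) (k := 3) rfl rfl rfl
  have h₄ : ‖t‖ ^ 2 + ‖u‖ ^ 2 + ‖w‖ ^ 2 ≤ 1 + 2 * (t * w * conj u).re :=
    hA.norm_sq_add_norm_sq_add_norm_sq_le (i := 1) (j := 2) (k := 3) rfl rfl rfl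
  have c₁ := neg_le_two_mul_re_mul_conj (x * w) (z * conj t)
  have c₂ := neg_le_two_mul_re_mul_conj (x * conj w) (y * conj u)
  have c₃ := neg_le_two_mul_re_mul_conj (z * t) (y * u)
  have q₁ := two_mul_sq_mul_sq_le (norm_nonneg x) hx (norm_nonneg w) hw
  have q₂ := two_mul_sq_mul_sq_le (norm_nonneg y) hy (norm_nonneg u) hu
  have q₃ := two_mul_sq_mul_sq_le (norm_nonneg z) hz (norm_nonneg t) ht
  rw [permanent_correlation_four, ← ofReal_pow, real_le_real]
  simp only [norm_mul, norm_conj, mul_pow] at c₁ c₂ c₃ ⊢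
  have hrows := half_sum_sq_row_sums_le (sq_nonneg ‖x‖) (sq_nonneg ‖y‖) (sq_nonneg ‖z‖)
    (sq_nonneg ‖t‖) (sq_nonneg ‖u‖) (sq_nonneg ‖w‖)
  refine (add_le_add_left (add_le_add_right hrows 1) _).trans (one_add_sq_le_sq ?_ ?_ ?_ ?_)
  · positivity
  all_goals linarith
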